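/- Let l ∈ (0, 1/4), r = 1 − 2l, and let M be as defined. Then for every probability measure ν on ℝ³ such that the pushforwards of ν under the three coordinate projections all equal Lebesgue measure on [0,1] and such that ν is concentrated on M (ν(M) = 1), the integral ∫ x·y·z dν(x,y,z) equals 3·∫₀^l t(1−2t)² dt + l·r²·(r − l). In particular, this integral is the same for all such measures ν. -/

import Mathlib

/-!
On `M` the product `xyz` is a function `F(x) = prodProfile l x` of the first coordinate
alone: `F(t) = t(1-2t)²` on `M_x`, `F = l r²` on `M₂`, and `F(x) = x²(1-x)/2` on `M_y` and
`M_z`, where `x = 1-2t`. Hence `∫ xyz dν = ∫₀¹ F`, which depends only on the first marginal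
of `ν`. The substitution `x = 1-2t` turns `∫ᵣ¹ F` into `2 ∫₀^l t(1-2t)² dt`, which produces
the factor `3`.
-/

open Set MeasureTheory

/-- The set `M ⊆ [0,1]³`: the union of the three segments
`Mx = {(t, 1−2t, 1−2t) : 0 ≤ t ≤ l}`, `My = {(1−2t, t, 1−2t) : 0 ≤ t ≤ l}`,
`Mz = {(1−2t, 1−2t, t) : 0 ≤ t ≤ l}` and the two-dimensional piece
`M₂ = {(x,y,z) : l ≤ x,y,z ≤ 1−2l, xyz = l(1−2l)²}`. -/
def Mset (l : ℝ) : Set (ℝ × ℝ × ℝ) :=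
  {p | ∃ t, 0 ≤ t ∧ t ≤ l ∧
    (p = (t, 1 - 2*t, 1 - 2*t) ∨ p = (1 - 2*t, t, 1 - 2*t) ∨ p = (1 - 2*t, 1 - 2*t, t))} ∪
  {p | l ≤ p.1 ∧ p.1 ≤ 1 - 2*l ∧ l ≤ p.2.1 ∧ p.2.1 ≤ 1 - 2*l ∧ l ≤ p.2.2 ∧ p.2.2 ≤ 1 - 2*l ∧
    p.1 * p.2.1 * p.2.2 = l * (1 - 2*l)^2}

noncomputable def prodProfile (l : ℝ) (x : ℝ) : ℝ :=
  if x ≤ l then x * (1 - 2*x)^2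
  else if x ≤ 1 - 2*l then l * (1 - 2*l)^2
  else ((1 - x)/2) * x^2

section prodProfile

variable {l x : ℝ}

lemma prodProfile_of_le (hx : x ≤ l) : prodProfile l x = x * (1 - 2*x)^2 := if_pos hx

lemma prodProfile_of_mem_Icc (hx : x ∈ Icc l (1 - 2*l)) :
    prodProfile l x = l * (1 - 2*l)^2 := by
  rcases hx.1.eq_or_lt with rfl | hlx
  · exact prodProfile_of_le le_rfl
  · rw [prodProfile, if_neg hlx.not_ge, if_pos hx.2]

lemma prodProfile_of_ge (hl : 3*l < 1) (hx : 1 - 2*l ≤ x) :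
    prodProfile l x = ((1 - x)/2) * x^2 := by
  rcases hx.eq_or_lt with rfl | hrx
  · rw [prodProfile_of_mem_Icc ⟨by linarith, le_rfl⟩]
    ring
  · rw [prodProfile, if_neg (by linarith), if_neg hrx.not_ge]

lemma continuous_prodProfile (hl : 3*l ≤ 1) : Continuous (prodProfile l) := by
  refine Continuous.if_le (by fun_prop) ?_ continuous_id continuous_const ?_
  · refine Continuous.if_le continuous_const (by fun_prop) continuous_id continuous_const ?_
    rintro x rfl
    ring
  · rintro x rfl
    rw [if_pos (by linarith)]

lemma mul_mul_eq_prodProfile_of_mem_Mset (hl : 3*l < 1) {p : ℝ × ℝ × ℝ}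
    (hp : p ∈ Mset l) :
    p.1 * p.2.1 * p.2.2 = prodProfile l p.1 := by
  rcases hp with ⟨t, -, htl, rfl | rfl | rfl⟩ | ⟨hx₁, hx₂, -, -, -, -, hxyz⟩
  · rw [prodProfile_of_le htl]
    ring
  · rw [prodProfile_of_ge hl (by linarith)]
    ring
  · rw [prodProfile_of_ge hl (by linarith)]
    ring
  · rw [prodProfile_of_mem_Icc ⟨hx₁, hx₂⟩, hxyz]

lemma ae_mul_mul_eq_prodProfile (hl : 3*l < 1) (ν : Measure (ℝ × ℝ × ℝ))
    [IsProbabilityMeasure ν] (hM : ν (Mset l) = 1) :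
    ∀ᵐ p ∂ν, p.1 * p.2.1 * p.2.2 = prodProfile l p.1 := by
  -- no measurability of `Mset l` is needed: the closed set where the identity holds contains it
  have hclosed : IsClosed {p : ℝ × ℝ × ℝ | p.1 * p.2.1 * p.2.2 = prodProfile l p.1} :=
    isClosed_eq (by fun_prop) ((continuous_prodProfile hl.le).comp continuous_fst)
  rw [ae_iff_measure_eq hclosed.measurableSet.nullMeasurableSet, measure_univ]
  exact le_antisymm prob_le_one
    (hM ▸ measure_mono fun p hp => mul_mul_eq_prodProfile_of_mem_Mset hl hp)

lemma integral_prodProfile (hl0 : 0 ≤ l) (hl : 3*l < 1) :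
    ∫ x in (0 : ℝ)..1, prodProfile l x =
      3 * (∫ t in (0 : ℝ)..l, t * (1 - 2*t)^2) + l * (1 - 2*l)^2 * ((1 - 2*l) - l) := by
  have hint (a b : ℝ) : IntervalIntegrable (prodProfile l) volume a b :=
    (continuous_prodProfile hl.le).intervalIntegrable a b
  have hleft : ∫ x in (0 : ℝ)..l, prodProfile l x = ∫ t in (0 : ℝ)..l, t * (1 - 2*t)^2 :=
    intervalIntegral.integral_congr fun x hx =>
      prodProfile_of_le (by rw [uIcc_of_le hl0] at hx; exact hx.2)
  have hmid : ∫ x in l..(1 - 2*l), prodProfile l x = l * (1 - 2*l)^2 * ((1 - 2*l) - l) := by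
    rw [intervalIntegral.integral_congr (g := fun _ => l * (1 - 2*l)^2) fun x hx =>
      prodProfile_of_mem_Icc (by rwa [uIcc_of_le (by linarith)] at hx),
      intervalIntegral.integral_const, smul_eq_mul, mul_comm]
  have hright :
      ∫ x in (1 - 2*l)..1, prodProfile l x = 2 * ∫ t in (0 : ℝ)..l, t * (1 - 2*t)^2 := by
    have hsubst := intervalIntegral.integral_comp_sub_mul (fun x => ((1 - x)/2) * x^2)
      (a := 0) (b := l) two_ne_zero 1
    simp only [mul_zero, sub_zero] at hsubst
    rw [intervalIntegral.integral_congr fun x hx =>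
      prodProfile_of_ge hl (by rw [uIcc_of_le (by linarith)] at hx; exact hx.1)]
    calc ∫ x in (1 - 2*l)..1, (1 - x)/2 * x^2
        = 2 * ∫ t in (0 : ℝ)..l, (1 - (1 - 2*t))/2 * (1 - 2*t)^2 := by
          rw [hsubst, smul_eq_mul, ← mul_assoc, mul_inv_cancel₀ two_ne_zero, one_mul]
      _ = 2 * ∫ t in (0 : ℝ)..l, t * (1 - 2*t)^2 := by ring_nf
  rw [← intervalIntegral.integral_add_adjacent_intervals (hint 0 l) (hint l 1),
    ← intervalIntegral.integral_add_adjacent_intervals (hint l (1 - 2*l)) (hint (1 - 2*l) 1),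
    hleft, hmid, hright]
  ring

end prodProfile

theorem integral_eq_of_stochastic_on_M_general (l : ℝ) (hl : l ∈ Set.Ioo (0 : ℝ) (1/4))
    (ν : Measure (ℝ × ℝ × ℝ)) [IsProbabilityMeasure ν]
    (h1 : ν.map (fun p => p.1) = volume.restrict (Set.Icc (0 : ℝ) 1))
    (hM : ν (Mset l) = 1) :
    ∫ p, p.1 * p.2.1 * p.2.2 ∂ν =
      3 * (∫ t in (0 : ℝ)..l, t * (1 - 2*t)^2) + l * (1 - 2*l)^2 * ((1 - 2*l) - l) := by
  obtain ⟨hl0, hl4⟩ := hl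
  have hl3 : 3*l < 1 := by linarith
  calc ∫ p, p.1 * p.2.1 * p.2.2 ∂ν
      = ∫ p, prodProfile l p.1 ∂ν := integral_congr_ae (ae_mul_mul_eq_prodProfile hl3 ν hM)
    _ = ∫ x, prodProfile l x ∂(ν.map (fun p => p.1)) :=
      (integral_map measurable_fst.aemeasurable
        (continuous_prodProfile hl3.le).aestronglyMeasurable).symm
    _ = ∫ x in (0 : ℝ)..1, prodProfile l x := by
      rw [h1, integral_Icc_eq_integral_Ioc, intervalIntegral.integral_of_le zero_le_one]
    _ = _ := integral_prodProfile hl0.le hl3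

/-- The integral `∫ xyz dν` is the same for every `(3,1)`-stochastic measure `ν`
concentrated on the set `M`; it equals `3·∫₀^l t(1−2t)² dt + l·r²·(r − l)`. -/
theorem integral_eq_of_stochastic_on_M (l : ℝ) (hl : l ∈ Set.Ioo (0 : ℝ) (1/4))
    (ν : Measure (ℝ × ℝ × ℝ)) [IsProbabilityMeasure ν]
    (h1 : ν.map (fun p => p.1) = volume.restrict (Set.Icc (0 : ℝ) 1))
    (h2 : ν.map (fun p => p.2.1) = volume.restrict (Set.Icc (0 : ℝ) 1))
    (h3 : ν.map (fun p => p.2.2) = volume.restrict (Set.Icc (0 : ℝ) 1))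
    (hM : ν (Mset l) = 1) :
    ∫ p, p.1 * p.2.1 * p.2.2 ∂ν =
      3 * (∫ t in (0 : ℝ)..l, t * (1 - 2*t)^2) + l * (1 - 2*l)^2 * ((1 - 2*l) - l) :=
  integral_eq_of_stochastic_on_M_general l hl ν h1 hM
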